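/- arXiv:2502.02160 — 7 statements merged into one kernel-verified Lean document; each statement's English description precedes it below -/
import Mathlib

section
/- Weyl's axiom for the exponential affine structure: for any three positive densities p, q, r on Ω, s_p(q) + eU^q_p( s_q(r) ) = s_p(r) pointwise on Ω, i.e. s_p(q)(x) + s_q(r)(x) − E_p[s_q(r)] = s_p(r)(x) for all x ∈ Ω. -/
/-- The exponential chart of a positive density `q` at `p` on a finite set:
`s_p(q)(x) = log (q x / p x) - E_p[log (q/p)]`. -/
noncomputable def expChart {Ω : Type*} [Fintype Ω] (p q : Ω → ℝ) (x : Ω) : ℝ :=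
  Real.log (q x / p x) - ∑ y, Real.log (q y / p y) * p y

/-- Weyl's axiom for the exponential affine structure:
`s_p(q) + eU^q_p (s_q(r)) = s_p(r)` pointwise. -/
theorem weyl_exponential {Ω : Type*} [Fintype Ω] [Nonempty Ω]
    (p q r : Ω → ℝ)
    (hp : ∀ x, 0 < p x) (hps : ∑ x, p x = 1)
    (hq : ∀ x, 0 < q x) (hqs : ∑ x, q x = 1)
    (hr : ∀ x, 0 < r x) (hrs : ∑ x, r x = 1)
    (x : Ω) :
    expChart p q x + (expChart q r x - ∑ y, expChart q r y * p y)
      = expChart p r x := by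
  have hlog : ∀ (a b : Ω → ℝ), (∀ y, 0 < a y) → (∀ y, 0 < b y) →
      ∀ y, Real.log (a y / b y) = Real.log (a y) - Real.log (b y) :=
    fun a b ha hb y => Real.log_div (ha y).ne' (hb y).ne'
  simp only [expChart, hlog r q hr hq, hlog q p hq hp, hlog r p hr hp, sub_mul,
    Finset.sum_sub_distrib, ← Finset.mul_sum, hps, hqs, mul_one]
  ring
end

section
/- The velocity in the moving exponential frame equals Fisher's score: let t ↦ q(t) be a curve of positive densities on Ω such that for each x ∈ Ω the map t ↦ q(t)(x) is differentiable at t₀ and ∑_x q(t)(x) = 1 for all t. Then for every x ∈ Ω the function t ↦ s_{q(t₀)}(q(t))(x) = log(q(t)(x)/q(t₀)(x)) − ∑_z q(t₀)(z) · log(q(t)(z)/q(t₀)(z)) is differentiable at t₀ with derivative equal to (d/dt log q(t)(x))|_{t=t₀} = q'(t₀)(x)/q(t₀)(x). -/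
/-! The chart differs from `log (q t x / q t₀ x)` by the `q t₀`-expectation of the same
log-ratio; its derivative at `t₀` is the expected score `∑ z, q' z`, which vanishes because
the total mass `∑ z, q t z` is constant. -/

open Finset

lemma HasDerivAt.log_div_apply_self {f : ℝ → ℝ} {f' t₀ : ℝ} (hf : HasDerivAt f f' t₀)
    (h : f t₀ ≠ 0) : HasDerivAt (fun t => Real.log (f t / f t₀)) (f' / f t₀) t₀ := by
  simpa [div_self h] using (hf.div_const (f t₀)).log (div_ne_zero h h)

lemma sum_deriv_eq_zero_of_sum_const {ι : Type*} (s : Finset ι) {q : ℝ → ι → ℝ}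
    {q' : ι → ℝ} {t₀ c : ℝ} (hsum : ∀ t, ∑ i ∈ s, q t i = c)
    (hderiv : ∀ i ∈ s, HasDerivAt (fun t => q t i) (q' i) t₀) :
    ∑ i ∈ s, q' i = 0 := by
  have h := HasDerivAt.fun_sum hderiv
  rw [show (fun t => ∑ i ∈ s, q t i) = fun _ => c from funext hsum] at h
  exact h.unique (hasDerivAt_const t₀ c)

theorem velocity_exp_chart_eq_score_general {Ω : Type*} [Fintype Ω]
    (q : ℝ → Ω → ℝ) (q' : Ω → ℝ) (t₀ : ℝ)
    (hpos : ∀ t x, 0 < q t x) (hsum : ∀ t, ∑ x, q t x = 1)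
    (hderiv : ∀ x, HasDerivAt (fun t => q t x) (q' x) t₀)
    (x : Ω) :
    HasDerivAt
      (fun t => Real.log (q t x / q t₀ x) - ∑ z, q t₀ z * Real.log (q t z / q t₀ z))
      (q' x / q t₀ x) t₀ := by
  have hscore z := (hderiv z).log_div_apply_self (hpos t₀ z).ne'
  have hmean_score : ∑ z, q t₀ z * (q' z / q t₀ z) = 0 := by
    rw [← sum_deriv_eq_zero_of_sum_const univ hsum fun z _ => hderiv z]
    exact sum_congr rfl fun z _ => mul_div_cancel₀ _ (hpos t₀ z).ne'
  have hmean : HasDerivAt (fun t => ∑ z, q t₀ z * Real.log (q t z / q t₀ z)) 0 t₀ :=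
    hmean_score ▸ HasDerivAt.fun_sum fun z _ => (hscore z).const_mul (q t₀ z)
  simpa using (hscore x).fun_sub hmean

/-- The velocity in the moving exponential frame equals Fisher's score:
for a differentiable curve of positive densities `t ↦ q t`, the derivative at `t₀` of
`t ↦ s_{q t₀}(q t)(x)` equals `q' t₀ x / q t₀ x = (d/dt) log (q t x) |_{t = t₀}`. -/
theorem velocity_exp_chart_eq_score {Ω : Type*} [Fintype Ω] [Nonempty Ω]
    (q : ℝ → Ω → ℝ) (q' : Ω → ℝ) (t₀ : ℝ)
    (hpos : ∀ t x, 0 < q t x) (hsum : ∀ t, ∑ x, q t x = 1)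
    (hderiv : ∀ x, HasDerivAt (fun t => q t x) (q' x) t₀)
    (x : Ω) :
    HasDerivAt
      (fun t => Real.log (q t x / q t₀ x) - ∑ z, q t₀ z * Real.log (q t z / q t₀ z))
      (q' x / q t₀ x) t₀ :=
  velocity_exp_chart_eq_score_general q q' t₀ hpos hsum hderiv x
end

section
/- Natural gradient of the KL divergence in its first argument: let t ↦ q(t) be a curve of positive densities on Ω, differentiable at t₀ in each coordinate, with ∑_x q(t)(x) = 1 for all t, and let r be a fixed positive density on Ω. Then t ↦ KL(q(t) ‖ r) is differentiable at t₀ with derivative equal to ⟨ q̇, −s_{q(t₀)}(r) ⟩_{q(t₀)} = −∑_x q̇(x) · s_{q(t₀)}(r)(x) · q(t₀)(x), where q̇(x) = (d/dt log q(t)(x))|_{t=t₀}. -/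
open Finset

theorem HasDerivAt.of_log {f : ℝ → ℝ} {f' t : ℝ} (hf : HasDerivAt (fun s => Real.log (f s)) f' t)
    (hpos : ∀ s, 0 < f s) : HasDerivAt f (f t * f') t := by
  have h := hf.exp
  simp only [Real.exp_log (hpos _)] at h
  exact h

theorem HasDerivAt.mul_log_div_const {f : ℝ → ℝ} {f' t c : ℝ} (hf : HasDerivAt f f' t)
    (hft : f t ≠ 0) (hc : c ≠ 0) :
    HasDerivAt (fun s => f s * Real.log (f s / c)) (f' * (Real.log (f t / c) + 1)) t := by
  refine (hf.fun_mul ((hf.div_const c).log (div_ne_zero hft hc))).congr_deriv ?_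
  field_simp

theorem sum_derivs_eq_zero_of_sum_const {ι : Type*} [Fintype ι] {f : ℝ → ι → ℝ} {f' : ι → ℝ}
    {t c : ℝ} (hf : ∀ i, HasDerivAt (fun s => f s i) (f' i) t) (hsum : ∀ s, ∑ i, f s i = c) :
    ∑ i, f' i = 0 := by
  have h : HasDerivAt (fun s => ∑ i, f s i) (∑ i, f' i) t := HasDerivAt.fun_sum fun i _ => hf i
  simp only [hsum] at h
  exact h.unique (hasDerivAt_const t c)

theorem expChart_eq_neg_log_div_add_sum {Ω : Type*} [Fintype Ω] (p q : Ω → ℝ) (x : Ω) :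
    expChart p q x = -Real.log (p x / q x) + ∑ y, p y * Real.log (p y / q y) := by
  simp only [expChart, ← inv_div (p _), Real.log_inv, neg_mul, sum_neg_distrib, mul_comm (p _)]
  ring

theorem sum_mul_add_const_of_sum_eq_zero {ι R : Type*} [Fintype ι] [NonUnitalNonAssocSemiring R]
    {a : ι → R} (b : ι → R) (c : R)
    (ha : ∑ i, a i = 0) : ∑ i, a i * (b i + c) = ∑ i, a i * b i := by
  simp only [mul_add, sum_add_distrib, ← sum_mul, ha, zero_mul, add_zero]

theorem KL_grad_first_general {Ω : Type*} [Fintype Ω]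
    (q : ℝ → Ω → ℝ) (qdot : Ω → ℝ) (t₀ : ℝ)
    (hpos : ∀ t x, 0 < q t x) (hsum : ∀ t, ∑ x, q t x = 1)
    (hscore : ∀ x, HasDerivAt (fun t => Real.log (q t x)) (qdot x) t₀)
    (r : Ω → ℝ) (hr : ∀ x, 0 < r x) :
    HasDerivAt (fun t => ∑ x, q t x * Real.log (q t x / r x))
      (-∑ x, qdot x * expChart (q t₀) r x * q t₀ x) t₀ := by
  have hq x : HasDerivAt (fun t => q t x) (q t₀ x * qdot x) t₀ :=
    (hscore x).of_log fun t => hpos t x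
  have hmass : ∑ x, q t₀ x * qdot x = 0 := sum_derivs_eq_zero_of_sum_const hq hsum
  have hKL := HasDerivAt.fun_sum (u := univ) fun x _ =>
    (hq x).mul_log_div_const (hpos t₀ x).ne' (hr x).ne'
  refine hKL.congr_deriv ?_
  set L := fun x => Real.log (q t₀ x / r x)
  calc ∑ x, q t₀ x * qdot x * (L x + 1)
      = ∑ x, q t₀ x * qdot x * (L x + -∑ y, q t₀ y * L y) := by
        rw [sum_mul_add_const_of_sum_eq_zero _ _ hmass, sum_mul_add_const_of_sum_eq_zero _ _ hmass]
    _ = -∑ x, qdot x * expChart (q t₀) r x * q t₀ x := by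
        rw [eq_neg_iff_add_eq_zero, ← sum_add_distrib]
        refine sum_eq_zero fun x _ => ?_
        rw [expChart_eq_neg_log_div_add_sum]
        ring

/-- Natural gradient of the KL divergence in the first argument:
along a curve `t ↦ q t` of positive densities with score `q̇` at `t₀`,
`(d/dt) KL(q t ‖ r) |_{t₀} = ⟨q̇, -s_{q t₀}(r)⟩_{q t₀}`. -/
theorem KL_grad_first {Ω : Type*} [Fintype Ω] [Nonempty Ω]
    (q : ℝ → Ω → ℝ) (qdot : Ω → ℝ) (t₀ : ℝ)
    (hpos : ∀ t x, 0 < q t x) (hsum : ∀ t, ∑ x, q t x = 1)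
    (hscore : ∀ x, HasDerivAt (fun t => Real.log (q t x)) (qdot x) t₀)
    (r : Ω → ℝ) (hr : ∀ x, 0 < r x) (hrs : ∑ x, r x = 1) :
    HasDerivAt (fun t => ∑ x, q t x * Real.log (q t x / r x))
      (-∑ x, qdot x * expChart (q t₀) r x * q t₀ x) t₀ :=
  KL_grad_first_general q qdot t₀ hpos hsum hscore r hr
end

section
/- Natural gradient of the KL divergence in its second argument: let q be a fixed positive density on Ω and let t ↦ r(t) be a curve of positive densities on Ω, differentiable at t₀ in each coordinate, with ∑_x r(t)(x) = 1 for all t. Then t ↦ KL(q ‖ r(t)) is differentiable at t₀ with derivative equal to ⟨ −η_{r(t₀)}(q), ṙ ⟩_{r(t₀)} = −∑_x (q(x)/r(t₀)(x) − 1) · ṙ(x) · r(t₀)(x), where ṙ(x) = (d/dt log r(t)(x))|_{t=t₀}. -/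
/-! Writing `KL(q ‖ r t) = ∑ q log q - ∑ q log (r t)`, the derivative is `-∑ q ṙ`. Since `ṙ` is
the score of `r`, the velocity of the curve is `ṙ · r t₀`, and because the total mass of `r t`
is constant this velocity sums to zero, so `-∑ q ṙ = -∑ (q / r t₀ - 1) ṙ r t₀`. -/

open Finset

lemma hasDerivAt_of_hasDerivAt_log {f : ℝ → ℝ} {s t₀ : ℝ} (hf : ∀ t, 0 < f t)
    (h : HasDerivAt (fun t => Real.log (f t)) s t₀) : HasDerivAt f (s * f t₀) t₀ := by
  have hexp := h.exp
  simp only [Real.exp_log (hf _)] at hexp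
  rwa [mul_comm]

lemma sum_deriv_eq_zero_of_sum_const_s7 {Ω : Type*} [Fintype Ω] {r : ℝ → Ω → ℝ} {v : Ω → ℝ}
    {t₀ c : ℝ} (hsum : ∀ t, ∑ x, r t x = c) (hr : ∀ x, HasDerivAt (fun t => r t x) (v x) t₀) :
    ∑ x, v x = 0 := by
  have hderiv : HasDerivAt (fun t => ∑ x, r t x) (∑ x, v x) t₀ :=
    HasDerivAt.fun_sum fun x _ => hr x
  simp only [hsum] at hderiv
  exact hderiv.unique (hasDerivAt_const t₀ c)

lemma hasDerivAt_mul_log_div {f : ℝ → ℝ} {a s t₀ : ℝ} (ha : a ≠ 0) (hf : ∀ t, 0 < f t)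
    (h : HasDerivAt (fun t => Real.log (f t)) s t₀) :
    HasDerivAt (fun t => a * Real.log (a / f t)) (-(a * s)) t₀ := by
  simp only [Real.log_div ha (hf _).ne']
  simpa using ((hasDerivAt_const t₀ (Real.log a)).sub h).const_mul a

theorem KL_grad_second_general {Ω : Type*} [Fintype Ω]
    (q : Ω → ℝ) (hq : ∀ x, 0 < q x)
    (r : ℝ → Ω → ℝ) (rdot : Ω → ℝ) (t₀ : ℝ)
    (hpos : ∀ t x, 0 < r t x) (hsum : ∀ t, ∑ x, r t x = 1)
    (hscore : ∀ x, HasDerivAt (fun t => Real.log (r t x)) (rdot x) t₀) :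
    HasDerivAt (fun t => ∑ x, q x * Real.log (q x / r t x))
      (-∑ x, (q x / r t₀ x - 1) * rdot x * r t₀ x) t₀ := by
  have hvel : ∑ x, rdot x * r t₀ x = 0 :=
    sum_deriv_eq_zero_of_sum_const_s7 hsum fun x =>
      hasDerivAt_of_hasDerivAt_log (fun t => hpos t x) (hscore x)
  have hterm (x : Ω) :
      (q x / r t₀ x - 1) * rdot x * r t₀ x = q x * rdot x - rdot x * r t₀ x := by
    field_simp [(hpos t₀ x).ne']
  have hgrad : -∑ x, (q x / r t₀ x - 1) * rdot x * r t₀ x = ∑ x, -(q x * rdot x) := by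
    rw [sum_congr rfl fun x _ => hterm x, sum_sub_distrib, hvel, sub_zero, sum_neg_distrib]
  rw [hgrad]
  exact HasDerivAt.fun_sum fun x _ =>
    hasDerivAt_mul_log_div (hq x).ne' (fun t => hpos t x) (hscore x)

/-- Natural gradient of the KL divergence in the second argument:
for a fixed positive density `q` and a curve `t ↦ r t` of positive densities with
score `ṙ` at `t₀`, `(d/dt) KL(q ‖ r t) |_{t₀} = ⟨-η_{r t₀}(q), ṙ⟩_{r t₀}`,
where `η_p(q)(x) = q x / p x - 1`. -/
theorem KL_grad_second {Ω : Type*} [Fintype Ω] [Nonempty Ω]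
    (q : Ω → ℝ) (hq : ∀ x, 0 < q x) (hqs : ∑ x, q x = 1)
    (r : ℝ → Ω → ℝ) (rdot : Ω → ℝ) (t₀ : ℝ)
    (hpos : ∀ t x, 0 < r t x) (hsum : ∀ t, ∑ x, r t x = 1)
    (hscore : ∀ x, HasDerivAt (fun t => Real.log (r t x)) (rdot x) t₀) :
    HasDerivAt (fun t => ∑ x, q x * Real.log (q x / r t x))
      (-∑ x, (q x / r t₀ x - 1) * rdot x * r t₀ x) t₀ :=
  KL_grad_second_general q hq r rdot t₀ hpos hsum hscore
end

section
/- Exponential decomposition of the joint chart: let p₁, p₂ be positive densities on Ω₁, Ω₂ respectively and q₁₂ a positive density on Ω₁ × Ω₂ with marginal q₁ and conditional q_{2|1}. Define u₁₂(x,y) = log(q₁₂(x,y)/(p₁(x)p₂(y))) − E_{p₁⊗p₂}[log(q₁₂/(p₁⊗p₂))], u₁(x) = log(q₁(x)/p₁(x)) − E_{p₁}[log(q₁/p₁)], and u_{2|1}(y|x) = log(q_{2|1}(y|x)/p₂(y)) − E_{p₂}[log(q_{2|1}(·|x)/p₂)]. Then for all (x,y): u₁₂(x,y) = u₁(x) +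 u_{2|1}(y|x) − KL(p₂ ‖ q_{2|1}(·|x)) + ∑_{x'} p₁(x') · KL(p₂ ‖ q_{2|1}(·|x')). -/
/-- Exponential decomposition of the joint chart:
`u₁₂(x,y) = u₁(x) + u_{2|1}(y|x) - KL(p₂ ‖ q_{2|1}(·|x)) + ∑_{x'} p₁ x' * KL(p₂ ‖ q_{2|1}(·|x'))`,
where `u₁₂ = s_{p₁⊗p₂}(q₁₂)`, `u₁ = s_{p₁}(q₁)` and `u_{2|1}(·|x) = s_{p₂}(q_{2|1}(·|x))`. -/
theorem exponential_decomposition {Ω₁ Ω₂ : Type*}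
    [Fintype Ω₁] [Fintype Ω₂] [Nonempty Ω₁] [Nonempty Ω₂]
    (p₁ : Ω₁ → ℝ) (p₂ : Ω₂ → ℝ) (q : Ω₁ → Ω₂ → ℝ)
    (hp₁ : ∀ x, 0 < p₁ x) (hp₁s : ∑ x, p₁ x = 1)
    (hp₂ : ∀ y, 0 < p₂ y) (hp₂s : ∑ y, p₂ y = 1)
    (hq : ∀ x y, 0 < q x y) (hqs : ∑ x, ∑ y, q x y = 1)
    (x : Ω₁) (y : Ω₂) :
    (Real.log (q x y / (p₁ x * p₂ y))
        - ∑ x', ∑ y', Real.log (q x' y' / (p₁ x' * p₂ y')) * (p₁ x' * p₂ y'))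
      = (Real.log ((∑ z, q x z) / p₁ x)
          - ∑ x', Real.log ((∑ z, q x' z) / p₁ x') * p₁ x')
        + (Real.log ((q x y / ∑ z, q x z) / p₂ y)
          - ∑ y', Real.log ((q x y' / ∑ z, q x z) / p₂ y') * p₂ y')
        - (∑ y', p₂ y' * Real.log (p₂ y' / (q x y' / ∑ z, q x z)))
        + ∑ x', p₁ x' * ∑ y', p₂ y' * Real.log (p₂ y' / (q x' y' / ∑ z, q x' z)) := by
  have hQ : ∀ a, 0 < ∑ z, q a z := fun a =>
    Finset.sum_pos (fun z _ => hq a z) Finset.univ_nonempty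
  set M : Ω₁ → ℝ := fun a => Real.log ((∑ z, q a z) / p₁ a) with hM
  set L : Ω₁ → Ω₂ → ℝ := fun a b => Real.log ((q a b / ∑ z, q a z) / p₂ b) with hL
  have key : ∀ a b, Real.log (q a b / (p₁ a * p₂ b)) = M a + L a b := by
    intro a b
    have hs : (∑ z, q a z) ≠ 0 := (hQ a).ne'
    have h1 : ((∑ z, q a z) / p₁ a) * ((q a b / ∑ z, q a z) / p₂ b)
        = q a b / (p₁ a * p₂ b) := by
      rw [div_mul_div_comm, mul_div_assoc', mul_div_cancel_left₀ _ hs]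
    rw [← h1, Real.log_mul]
    · exact ne_of_gt (div_pos (hQ a) (hp₁ a))
    · exact ne_of_gt (div_pos (div_pos (hq a b) (hQ a)) (hp₂ b))
  have kl : ∀ a b, Real.log (p₂ b / (q a b / ∑ z, q a z)) = -(L a b) := by
    intro a b
    rw [hL, ← Real.log_inv]
    congr 1
    field_simp
  have expand : ∀ a, ∑ b, (M a + L a b) * (p₁ a * p₂ b)
      = M a * p₁ a + p₁ a * ∑ b, L a b * p₂ b := by
    intro a
    have : ∀ b, (M a + L a b) * (p₁ a * p₂ b)
        = M a * p₁ a * p₂ b + p₁ a * (L a b * p₂ b) := fun b => by ring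
    simp only [this, Finset.sum_add_distrib, ← Finset.mul_sum, hp₂s, mul_one]
  have c1 : ∀ a, ∑ b, p₂ b * L a b = ∑ b, L a b * p₂ b := fun a =>
    Finset.sum_congr rfl (fun b _ => mul_comm _ _)
  have c2 : ∑ x', Real.log ((∑ z, q x' z) / p₁ x') * p₁ x' = ∑ x', M x' * p₁ x' :=
    Finset.sum_congr rfl (fun a _ => rfl)
  simp only [key, kl, expand, Finset.sum_add_distrib, mul_neg, Finset.sum_neg_distrib, c1]
  ring
end

section
/- The velocity of the marginal of an exponential family is the conditional expectation of its velocity: let p₁, p₂ be positive densities on nonempty finite sets Ω₁, Ω₂, T : Ω₁ × Ω₂ → (Fin d → ℝ), ψ(θ) = log(∑_{x,y} exp(θ·T(x,y)) p₁(x)p₂(y)), G(θ)(x,y) = exp(θ·T(x,y) − ψ(θ)) p₁(x)p₂(y), G₁(θ)(x) = ∑_z G(θ)(x,z), and let t ↦ θ(t) be differentiable at t₀. Then for every x ∈ Ω₁, t ↦ log G₁(θ(t))(x) is differentiable at t₀ with derivative ∑_j ( ∑_z (T_j(x,z) − E_{G(θ(t₀))}[T_j]) · G(θ(t₀))(x,z)/G₁(θ(t₀))(x)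 ) · θ'_j(t₀). -/
/-!
Both `log G₁(θ)(x)` and `ψ(θ)` are log-sum-exp functions of `θ`: writing
`w(x,y) = exp(θ·T(x,y)) p₁(x) p₂(y)`, one has `log G₁(θ)(x) = log ∑_z w(x,z) - log ∑_{x,y} w(x,y)`.
The derivative of `t ↦ log ∑_i exp(θ(t)·T_i) c_i` is the mean of `θ'·T` under the Gibbs density
`exp(θ·T_i) c_i / ∑_k exp(θ·T_k) c_k`. For the first term this Gibbs density is the conditional
`G(θ)(x,·)/G₁(θ)(x)`, for the second it is `G(θ)` itself, and the difference of the two means is the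
conditional expectation of the centred statistic.
-/

/-- Log-partition function of the exponential family on a product space with
reference density `p₁ ⊗ p₂`. -/
noncomputable def logPartition2 {Ω₁ Ω₂ : Type*} [Fintype Ω₁] [Fintype Ω₂] {d : ℕ}
    (p₁ : Ω₁ → ℝ) (p₂ : Ω₂ → ℝ) (T : Ω₁ × Ω₂ → Fin d → ℝ) (θ : Fin d → ℝ) : ℝ :=
  Real.log (∑ x, ∑ y, Real.exp (∑ j, θ j * T (x, y) j) * (p₁ x * p₂ y))

/-- The exponential family `G(θ)(x,y) = exp(θ·T(x,y) - ψ(θ)) · p₁(x) p₂(y)`. -/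
noncomputable def expFamily2 {Ω₁ Ω₂ : Type*} [Fintype Ω₁] [Fintype Ω₂] {d : ℕ}
    (p₁ : Ω₁ → ℝ) (p₂ : Ω₂ → ℝ) (T : Ω₁ × Ω₂ → Fin d → ℝ) (θ : Fin d → ℝ)
    (x : Ω₁) (y : Ω₂) : ℝ :=
  Real.exp ((∑ j, θ j * T (x, y) j) - logPartition2 p₁ p₂ T θ) * (p₁ x * p₂ y)

open Finset

section Gibbs

variable {ι : Type*} [Fintype ι] {d : ℕ} (c : ι → ℝ) (T : ι → Fin d → ℝ)

noncomputable def partitionSum (θ : Fin d → ℝ) : ℝ :=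
  ∑ i, Real.exp (∑ j, θ j * T i j) * c i

noncomputable def gibbs (θ : Fin d → ℝ) (i : ι) : ℝ :=
  Real.exp (∑ j, θ j * T i j) * c i / partitionSum c T θ

variable {c}

theorem partitionSum_pos [Nonempty ι] (hc : ∀ i, 0 < c i) (θ : Fin d → ℝ) :
    0 < partitionSum c T θ :=
  sum_pos (fun i _ => mul_pos (Real.exp_pos _) (hc i)) univ_nonempty

theorem sum_gibbs [Nonempty ι] (hc : ∀ i, 0 < c i) (θ : Fin d → ℝ) :
    ∑ i, gibbs c T θ i = 1 := by
  unfold gibbs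
  rw [← sum_div]
  exact div_self (partitionSum_pos T hc θ).ne'

theorem sum_sub_mul_gibbs [Nonempty ι] (hc : ∀ i, 0 < c i) (θ : Fin d → ℝ) (f : ι → ℝ)
    (a : ℝ) : ∑ i, (f i - a) * gibbs c T θ i = ∑ i, f i * gibbs c T θ i - a := by
  simp only [sub_mul, sum_sub_distrib, ← mul_sum, sum_gibbs T hc, mul_one]

theorem hasDerivAt_partitionSum {θ : ℝ → Fin d → ℝ} {θ' : Fin d → ℝ} {t₀ : ℝ}
    (hθ : ∀ j, HasDerivAt (fun t => θ t j) (θ' j) t₀) :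
    HasDerivAt (fun t => partitionSum c T (θ t))
      (∑ i, Real.exp (∑ j, θ t₀ j * T i j) * (∑ j, θ' j * T i j) * c i) t₀ :=
  HasDerivAt.fun_sum fun i _ =>
    (HasDerivAt.fun_sum fun j _ => (hθ j).mul_const (T i j)).exp.mul_const (c i)

theorem hasDerivAt_log_partitionSum [Nonempty ι] (hc : ∀ i, 0 < c i)
    {θ : ℝ → Fin d → ℝ} {θ' : Fin d → ℝ} {t₀ : ℝ}
    (hθ : ∀ j, HasDerivAt (fun t => θ t j) (θ' j) t₀) :
    HasDerivAt (fun t => Real.log (partitionSum c T (θ t)))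
      (∑ j, (∑ i, T i j * gibbs c T (θ t₀) i) * θ' j) t₀ := by
  refine ((hasDerivAt_partitionSum T hθ).log (partitionSum_pos T hc _).ne').congr_deriv ?_
  simp only [gibbs, sum_div, sum_mul]
  rw [sum_comm]
  refine sum_congr rfl fun i _ => ?_
  rw [mul_sum, sum_mul, sum_div]
  exact sum_congr rfl fun j _ => by ring

end Gibbs

section ExpFamily2

variable {Ω₁ Ω₂ : Type*} [Fintype Ω₁] [Fintype Ω₂] {d : ℕ}
  (p₁ : Ω₁ → ℝ) (p₂ : Ω₂ → ℝ) (T : Ω₁ × Ω₂ → Fin d → ℝ)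

theorem partitionSum_prod (θ : Fin d → ℝ) :
    partitionSum (fun q : Ω₁ × Ω₂ => p₁ q.1 * p₂ q.2) T θ
      = ∑ x, ∑ y, Real.exp (∑ j, θ j * T (x, y) j) * (p₁ x * p₂ y) :=
  Fintype.sum_prod_type _

theorem expFamily2_eq_gibbs {θ : Fin d → ℝ}
    (hψ : 0 < partitionSum (fun q : Ω₁ × Ω₂ => p₁ q.1 * p₂ q.2) T θ)
    (x : Ω₁) (y : Ω₂) :
    expFamily2 p₁ p₂ T θ x y = gibbs (fun q : Ω₁ × Ω₂ => p₁ q.1 * p₂ q.2) T θ (x, y) := by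
  rw [partitionSum_prod] at hψ
  rw [expFamily2, logPartition2, Real.exp_sub, Real.exp_log hψ, gibbs, partitionSum_prod]
  ring

variable {p₁ p₂}

theorem sum_expFamily2 [Nonempty Ω₂] (hp₁ : ∀ x, 0 < p₁ x) (hp₂ : ∀ y, 0 < p₂ y)
    (θ : Fin d → ℝ) (x : Ω₁) :
    ∑ z, expFamily2 p₁ p₂ T θ x z
      = partitionSum (fun z => p₁ x * p₂ z) (fun z => T (x, z)) θ
        / partitionSum (fun q : Ω₁ × Ω₂ => p₁ q.1 * p₂ q.2) T θ := by
  have : Nonempty Ω₁ := ⟨x⟩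
  have hψ := partitionSum_pos T (fun q : Ω₁ × Ω₂ => mul_pos (hp₁ q.1) (hp₂ q.2)) θ
  simp only [expFamily2_eq_gibbs p₁ p₂ T hψ, gibbs, partitionSum, sum_div]

theorem expFamily2_div_sum_expFamily2 [Nonempty Ω₂] (hp₁ : ∀ x, 0 < p₁ x) (hp₂ : ∀ y, 0 < p₂ y)
    (θ : Fin d → ℝ) (x : Ω₁) (z : Ω₂) :
    expFamily2 p₁ p₂ T θ x z / ∑ z', expFamily2 p₁ p₂ T θ x z'
      = gibbs (fun z => p₁ x * p₂ z) (fun z => T (x, z)) θ z := by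
  have : Nonempty Ω₁ := ⟨x⟩
  have hψ := partitionSum_pos T (fun q : Ω₁ × Ω₂ => mul_pos (hp₁ q.1) (hp₂ q.2)) θ
  rw [sum_expFamily2 T hp₁ hp₂, expFamily2_eq_gibbs p₁ p₂ T hψ, gibbs, gibbs,
    div_div_div_cancel_right₀ hψ.ne']

end ExpFamily2

theorem expFamily_marginal_velocity_general {Ω₁ Ω₂ : Type*}
    [Fintype Ω₁] [Fintype Ω₂] [Nonempty Ω₂] {d : ℕ}
    (p₁ : Ω₁ → ℝ) (hp₁ : ∀ x, 0 < p₁ x)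
    (p₂ : Ω₂ → ℝ) (hp₂ : ∀ y, 0 < p₂ y)
    (T : Ω₁ × Ω₂ → Fin d → ℝ)
    (θ : ℝ → Fin d → ℝ) (θ' : Fin d → ℝ) (t₀ : ℝ)
    (hθ : ∀ j, HasDerivAt (fun t => θ t j) (θ' j) t₀)
    (x : Ω₁) :
    HasDerivAt (fun t => Real.log (∑ z, expFamily2 p₁ p₂ T (θ t) x z))
      (∑ j, (∑ z, (T (x, z) j - ∑ x', ∑ y', T (x', y') j * expFamily2 p₁ p₂ T (θ t₀) x' y')
          * expFamily2 p₁ p₂ T (θ t₀) x z / (∑ z', expFamily2 p₁ p₂ T (θ t₀) x z'))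
        * θ' j) t₀ := by
  have : Nonempty Ω₁ := ⟨x⟩
  have hc : ∀ q : Ω₁ × Ω₂, 0 < p₁ q.1 * p₂ q.2 := fun q => mul_pos (hp₁ q.1) (hp₂ q.2)
  have hcx : ∀ z, 0 < p₁ x * p₂ z := fun z => hc (x, z)
  have hlog : (fun t => Real.log (∑ z, expFamily2 p₁ p₂ T (θ t) x z))
      = fun t => Real.log (partitionSum (fun z => p₁ x * p₂ z) (fun z => T (x, z)) (θ t))
          - Real.log (partitionSum (fun q : Ω₁ × Ω₂ => p₁ q.1 * p₂ q.2) T (θ t)) := by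
    funext t
    rw [sum_expFamily2 T hp₁ hp₂, Real.log_div (partitionSum_pos _ hcx _).ne'
      (partitionSum_pos T hc _).ne']
  rw [hlog]
  refine ((hasDerivAt_log_partitionSum _ hcx hθ).sub
    (hasDerivAt_log_partitionSum T hc hθ)).congr_deriv ?_
  rw [← sum_sub_distrib]
  refine sum_congr rfl fun j _ => ?_
  simp_rw [mul_div_assoc, expFamily2_div_sum_expFamily2 T hp₁ hp₂]
  rw [sum_sub_mul_gibbs _ hcx, sub_mul]
  simp_rw [expFamily2_eq_gibbs p₁ p₂ T (partitionSum_pos T hc _)]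
  rw [← Fintype.sum_prod_type']

/-- The velocity of the marginal of an exponential family is the conditional
expectation of its velocity:
`(d/dt) log G₁(θ t)(x) |_{t₀}
  = ∑ j, (∑ z, (T_j(x,z) - E_{G(θ t₀)}[T_j]) · G(θ t₀)(x,z)/G₁(θ t₀)(x)) · θ'_j(t₀)`. -/
theorem expFamily_marginal_velocity {Ω₁ Ω₂ : Type*}
    [Fintype Ω₁] [Fintype Ω₂] [Nonempty Ω₁] [Nonempty Ω₂] {d : ℕ}
    (p₁ : Ω₁ → ℝ) (hp₁ : ∀ x, 0 < p₁ x) (hp₁s : ∑ x, p₁ x = 1)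
    (p₂ : Ω₂ → ℝ) (hp₂ : ∀ y, 0 < p₂ y) (hp₂s : ∑ y, p₂ y = 1)
    (T : Ω₁ × Ω₂ → Fin d → ℝ)
    (θ : ℝ → Fin d → ℝ) (θ' : Fin d → ℝ) (t₀ : ℝ)
    (hθ : ∀ j, HasDerivAt (fun t => θ t j) (θ' j) t₀)
    (x : Ω₁) :
    HasDerivAt (fun t => Real.log (∑ z, expFamily2 p₁ p₂ T (θ t) x z))
      (∑ j, (∑ z, (T (x, z) j - ∑ x', ∑ y', T (x', y') j * expFamily2 p₁ p₂ T (θ t₀) x' y')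
          * expFamily2 p₁ p₂ T (θ t₀) x z / (∑ z', expFamily2 p₁ p₂ T (θ t₀) x z'))
        * θ' j) t₀ :=
  expFamily_marginal_velocity_general p₁ hp₁ p₂ hp₂ T θ θ' t₀ hθ x
end

section
/- Derivative of the KL divergence from a fixed margin to the marginal of an exponential family: with the exponential family G(θ)(x,y) = exp(θ·T(x,y) − ψ(θ)) p₁(x)p₂(y), ψ(θ) = log(∑_{x,y} exp(θ·T(x,y)) p₁(x)p₂(y)), marginal G₁(θ)(x) = ∑_z G(θ)(x,z), a fixed positive density r₁ on Ω₁, and t ↦ θ(t) differentiable at t₀, the function t ↦ KL(r₁ ‖ G₁(θ(t))) is differentiable at t₀ with derivative −∑_j ( ∑_x r₁(x) · ∑_z (T_j(x,z) − E_{G(θ(t₀))}[T_j]) · G(θ(t₀))(x,z)/G₁(θ(t₀))(x) ) · θ'_j(t₀). -/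
/-! With `w(θ) = exp(θ·T) p₁ p₂` and `Z = ∑ w`, we have `G = w / Z` and `ψ = log Z`, so
`∂ψ = E_G[T]·θ'` and hence the score identity `∂G = G · (T - E_G[T])·θ'`. Summing over `z` gives
`∂G₁`, and the chain rule for `r log (r / G₁)` turns `∂G₁ / G₁` into the stated formula after
exchanging the sums over `x`, `z` and `j`. -/

open Finset Real

theorem HasDerivAt.const_mul_log_const_div {f : ℝ → ℝ} {f' t₀ : ℝ} (c : ℝ)
    (hf : HasDerivAt f f' t₀) (hf₀ : f t₀ ≠ 0) :
    HasDerivAt (fun t => c * Real.log (c / f t)) (-(c * (f' / f t₀))) t₀ := by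
  rcases eq_or_ne c 0 with rfl | hc
  · simpa using hasDerivAt_const t₀ (0 : ℝ)
  · have h := (((hasDerivAt_const t₀ c).fun_div hf hf₀).log (div_ne_zero hc hf₀)).const_mul c
    refine h.congr_deriv ?_
    field_simp
    ring

section ExpFamily

variable {Ω₁ Ω₂ : Type*} [Fintype Ω₁] [Fintype Ω₂] {d : ℕ}
  (p₁ : Ω₁ → ℝ) (p₂ : Ω₂ → ℝ) (T : Ω₁ × Ω₂ → Fin d → ℝ)

noncomputable def partition2 (θ : Fin d → ℝ) : ℝ :=
  ∑ x, ∑ y, exp (∑ j, θ j * T (x, y) j) * (p₁ x * p₂ y)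

variable {p₁ p₂}

theorem partition2_pos [Nonempty Ω₁] [Nonempty Ω₂] (hp₁ : ∀ x, 0 < p₁ x) (hp₂ : ∀ y, 0 < p₂ y)
    (θ : Fin d → ℝ) : 0 < partition2 p₁ p₂ T θ :=
  sum_pos (fun x _ => sum_pos (fun y _ => mul_pos (exp_pos _) (mul_pos (hp₁ x) (hp₂ y)))
    univ_nonempty) univ_nonempty

theorem expFamily2_pos {x : Ω₁} {y : Ω₂} (hx : 0 < p₁ x) (hy : 0 < p₂ y) (θ : Fin d → ℝ) :
    0 < expFamily2 p₁ p₂ T θ x y := by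
  unfold expFamily2
  positivity

theorem expFamily2_eq_div_partition2 [Nonempty Ω₁] [Nonempty Ω₂] (hp₁ : ∀ x, 0 < p₁ x)
    (hp₂ : ∀ y, 0 < p₂ y) (θ : Fin d → ℝ) (x : Ω₁) (y : Ω₂) :
    expFamily2 p₁ p₂ T θ x y
      = exp (∑ j, θ j * T (x, y) j) * (p₁ x * p₂ y) / partition2 p₁ p₂ T θ := by
  rw [expFamily2, exp_sub, logPartition2, ← partition2, exp_log (partition2_pos T hp₁ hp₂ θ)]
  ring

variable {θ : ℝ → Fin d → ℝ} {θ' : Fin d → ℝ} {t₀ : ℝ}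

theorem hasDerivAt_sum_mul_apply (hθ : ∀ j, HasDerivAt (fun t => θ t j) (θ' j) t₀)
    (v : Fin d → ℝ) :
    HasDerivAt (fun t => ∑ j, θ t j * v j) (∑ j, θ' j * v j) t₀ :=
  HasDerivAt.fun_sum fun j _ => (hθ j).mul_const (v j)

theorem hasDerivAt_logPartition2 [Nonempty Ω₁] [Nonempty Ω₂] (hp₁ : ∀ x, 0 < p₁ x)
    (hp₂ : ∀ y, 0 < p₂ y) (hθ : ∀ j, HasDerivAt (fun t => θ t j) (θ' j) t₀) :
    HasDerivAt (fun t => logPartition2 p₁ p₂ T (θ t))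
      (∑ j, (∑ x, ∑ y, T (x, y) j * expFamily2 p₁ p₂ T (θ t₀) x y) * θ' j) t₀ := by
  have hZ : HasDerivAt (fun t => partition2 p₁ p₂ T (θ t))
      (∑ x, ∑ y, exp (∑ j, θ t₀ j * T (x, y) j) * (∑ j, θ' j * T (x, y) j) * (p₁ x * p₂ y))
      t₀ :=
    HasDerivAt.fun_sum fun x _ => HasDerivAt.fun_sum fun y _ =>
      ((hasDerivAt_sum_mul_apply hθ _).exp).mul_const _
  refine (hZ.log (partition2_pos T hp₁ hp₂ _).ne').congr_deriv ?_
  simp only [expFamily2_eq_div_partition2 T hp₁ hp₂, sum_div, sum_mul, mul_sum]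
  symm
  rw [sum_comm]
  refine sum_congr rfl fun x _ => ?_
  rw [sum_comm]
  refine sum_congr rfl fun y _ => sum_congr rfl fun j _ => ?_
  ring

theorem hasDerivAt_expFamily2 [Nonempty Ω₁] [Nonempty Ω₂] (hp₁ : ∀ x, 0 < p₁ x)
    (hp₂ : ∀ y, 0 < p₂ y) (hθ : ∀ j, HasDerivAt (fun t => θ t j) (θ' j) t₀)
    (x : Ω₁) (y : Ω₂) :
    HasDerivAt (fun t => expFamily2 p₁ p₂ T (θ t) x y)
      (expFamily2 p₁ p₂ T (θ t₀) x y *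
        ∑ j, (T (x, y) j - ∑ x', ∑ y', T (x', y') j * expFamily2 p₁ p₂ T (θ t₀) x' y')
          * θ' j) t₀ := by
  have h := (((hasDerivAt_sum_mul_apply hθ (T (x, y))).fun_sub
    (hasDerivAt_logPartition2 T hp₁ hp₂ hθ)).exp).mul_const (p₁ x * p₂ y)
  refine h.congr_deriv ?_
  simp only [expFamily2, sub_mul, sum_sub_distrib, mul_comm (θ' _)]
  ring

end ExpFamily

theorem KL_margin_to_expFamily_marginal_derivative_general {Ω₁ Ω₂ : Type*}
    [Fintype Ω₁] [Fintype Ω₂] [Nonempty Ω₁] [Nonempty Ω₂] {d : ℕ}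
    (p₁ : Ω₁ → ℝ) (hp₁ : ∀ x, 0 < p₁ x)
    (p₂ : Ω₂ → ℝ) (hp₂ : ∀ y, 0 < p₂ y)
    (T : Ω₁ × Ω₂ → Fin d → ℝ)
    (r₁ : Ω₁ → ℝ)
    (θ : ℝ → Fin d → ℝ) (θ' : Fin d → ℝ) (t₀ : ℝ)
    (hθ : ∀ j, HasDerivAt (fun t => θ t j) (θ' j) t₀) :
    HasDerivAt
      (fun t => ∑ x, r₁ x * Real.log (r₁ x / ∑ z, expFamily2 p₁ p₂ T (θ t) x z))
      (-∑ j, (∑ x, r₁ x *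
          ∑ z, (T (x, z) j - ∑ x', ∑ y', T (x', y') j * expFamily2 p₁ p₂ T (θ t₀) x' y')
            * expFamily2 p₁ p₂ T (θ t₀) x z / (∑ z', expFamily2 p₁ p₂ T (θ t₀) x z'))
        * θ' j) t₀ := by
  have hmarg_pos (x : Ω₁) : 0 < ∑ z, expFamily2 p₁ p₂ T (θ t₀) x z :=
    sum_pos (fun z _ => expFamily2_pos T (hp₁ x) (hp₂ z) _) univ_nonempty
  have h := HasDerivAt.fun_sum fun x (_ : x ∈ univ) =>
    (HasDerivAt.fun_sum fun z _ => hasDerivAt_expFamily2 T hp₁ hp₂ hθ x z).const_mul_log_const_div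
      (r₁ x) (hmarg_pos x).ne'
  refine h.congr_deriv ?_
  simp only [sum_div, mul_sum, sum_mul, ← sum_neg_distrib]
  symm
  rw [sum_comm]
  refine sum_congr rfl fun x _ => ?_
  rw [sum_comm]
  refine sum_congr rfl fun z _ => sum_congr rfl fun j _ => ?_
  ring

/-- Derivative of the KL divergence from a fixed margin `r₁` to the marginal
`G₁(θ t)` of an exponential family:
`(d/dt) KL(r₁ ‖ G₁(θ t)) |_{t₀}
  = -∑ j, (∑ x, r₁ x · ∑ z, (T_j(x,z) - E_{G(θ t₀)}[T_j]) · G(θ t₀)(x,z)/G₁(θ t₀)(x)) · θ'_j(t₀)`. -/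
theorem KL_margin_to_expFamily_marginal_derivative {Ω₁ Ω₂ : Type*}
    [Fintype Ω₁] [Fintype Ω₂] [Nonempty Ω₁] [Nonempty Ω₂] {d : ℕ}
    (p₁ : Ω₁ → ℝ) (hp₁ : ∀ x, 0 < p₁ x) (hp₁s : ∑ x, p₁ x = 1)
    (p₂ : Ω₂ → ℝ) (hp₂ : ∀ y, 0 < p₂ y) (hp₂s : ∑ y, p₂ y = 1)
    (T : Ω₁ × Ω₂ → Fin d → ℝ)
    (r₁ : Ω₁ → ℝ) (hr₁ : ∀ x, 0 < r₁ x) (hr₁s : ∑ x, r₁ x = 1)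
    (θ : ℝ → Fin d → ℝ) (θ' : Fin d → ℝ) (t₀ : ℝ)
    (hθ : ∀ j, HasDerivAt (fun t => θ t j) (θ' j) t₀) :
    HasDerivAt
      (fun t => ∑ x, r₁ x * Real.log (r₁ x / ∑ z, expFamily2 p₁ p₂ T (θ t) x z))
      (-∑ j, (∑ x, r₁ x *
          ∑ z, (T (x, z) j - ∑ x', ∑ y', T (x', y') j * expFamily2 p₁ p₂ T (θ t₀) x' y')
            * expFamily2 p₁ p₂ T (θ t₀) x z / (∑ z', expFamily2 p₁ p₂ T (θ t₀) x z'))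
        * θ' j) t₀ :=
  KL_margin_to_expFamily_marginal_derivative_general p₁ hp₁ p₂ hp₂ T r₁ θ θ' t₀ hθ
end
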